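/- arXiv:math/0207044 — 4 statements merged into one kernel-verified Lean document; each statement's English description precedes it below -/
import Mathlib

section
/- Let B be a stable m×m real matrix and let R be an m×m real matrix. Then the algebraic Lyapunov equation BP + PBᵀ + R = 0 has at most one solution P among m×m real matrices. -/
open Matrix

open Polynomial
lemma charpoly_eval' {m : ℕ} (M : Matrix (Fin m) (Fin m) ℂ) (r : ℂ) :
    M.charpoly.eval r = (r • (1 : Matrix (Fin m) (Fin m) ℂ) - M).det := by
  rw [Matrix.charpoly]
  have h : (charmatrix M).map (evalRingHom r) = r • (1 : Matrix (Fin m) (Fin m) ℂ) - M := by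
    ext i j
    by_cases h : i = j
    · subst h
      simp [charmatrix_apply_eq, Matrix.smul_apply, Matrix.one_apply]
    · simp [charmatrix_apply_ne _ _ _ h, Matrix.smul_apply, Matrix.one_apply, h]
  calc (charmatrix M).det.eval r = (evalRingHom r) (charmatrix M).det := rfl
    _ = ((charmatrix M).map (evalRingHom r)).det := by rw [RingHom.map_det]; rfl
    _ = _ := by rw [h]

lemma mem_spectrum_iff_eval' {m : ℕ} (M : Matrix (Fin m) (Fin m) ℂ) (z : ℂ) :
    z ∈ spectrum ℂ M ↔ M.charpoly.eval z = 0 := by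
  rw [spectrum.mem_iff, Algebra.algebraMap_eq_smul_one, Matrix.isUnit_iff_isUnit_det,
    isUnit_iff_ne_zero, not_not, charpoly_eval']

lemma intertwine_pow {m : ℕ} {A C Q : Matrix (Fin m) (Fin m) ℂ} (h : A * Q = Q * C) :
    ∀ n : ℕ, A ^ n * Q = Q * C ^ n := by
  intro n
  induction n with
  | zero => simp
  | succ n ih =>
    rw [pow_succ, pow_succ, mul_assoc, h, ← mul_assoc, ih, mul_assoc]

lemma intertwine_aeval {m : ℕ} {A C Q : Matrix (Fin m) (Fin m) ℂ} (h : A * Q = Q * C)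
    (p : ℂ[X]) : (aeval A p) * Q = Q * (aeval C p) := by
  induction p using Polynomial.induction_on' with
  | add p q hp hq => simp [map_add, add_mul, mul_add, hp, hq]
  | monomial n a =>
    simp only [aeval_monomial]
    rw [mul_assoc, intertwine_pow h n, Algebra.algebraMap_eq_smul_one,
      smul_mul_assoc, one_mul, smul_mul_assoc, mul_smul_comm, one_mul]

theorem lyapunov_unique' {m : ℕ} (B R : Matrix (Fin m) (Fin m) ℝ)
    (hB : ∀ z ∈ spectrum ℂ (B.map Complex.ofReal), z.re < 0) :
    ∀ P₁ P₂ : Matrix (Fin m) (Fin m) ℝ,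
      B * P₁ + P₁ * Bᵀ + R = 0 → B * P₂ + P₂ * Bᵀ + R = 0 → P₁ = P₂ := by
  intro P₁ P₂ h₁ h₂
  set Q : Matrix (Fin m) (Fin m) ℝ := P₁ - P₂ with hQdef
  have hQ : B * Q + Q * Bᵀ = 0 := by
    have := sub_eq_zero.mpr (h₁.trans h₂.symm)
    simp only [hQdef]
    rw [Matrix.mul_sub, Matrix.sub_mul]
    linear_combination (norm := abel) this
  -- complexify
  let φ : Matrix (Fin m) (Fin m) ℝ →+* Matrix (Fin m) (Fin m) ℂ :=
    (Complex.ofRealHom : ℝ →+* ℂ).mapMatrix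
  set A : Matrix (Fin m) (Fin m) ℂ := φ B with hA
  set Qc : Matrix (Fin m) (Fin m) ℂ := φ Q with hQc
  have hmapT : φ Bᵀ = Aᵀ := by
    simp [hA, φ, RingHom.mapMatrix_apply, Matrix.transpose_map]
  have hQC : A * Qc + Qc * Aᵀ = 0 := by
    have := congrArg φ hQ
    rw [map_add] at this
    rw [_root_.map_mul, _root_.map_mul, map_zero, hmapT] at this
    exact this
  have hcomm : A * Qc = Qc * (-Aᵀ) := by
    rw [mul_neg, eq_neg_iff_add_eq_zero]
    exact hQC
  -- spectrum transfer
  have hspec : ∀ z ∈ spectrum ℂ A, z.re < 0 := by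
    intro z hz
    exact hB z hz
  set q : ℂ[X] := A.charpoly with hq
  have h0 : Qc * (aeval (-Aᵀ) q) = 0 := by
    rw [← intertwine_aeval hcomm q, hq, Matrix.aeval_self_charpoly, zero_mul]
  -- determinant of aeval (-Aᵀ) q
  let g : ℂ[X] →* ℂ :=
    Matrix.detMonoidHom.comp ((aeval (-Aᵀ) : ℂ[X] →ₐ[ℂ] Matrix (Fin m) (Fin m) ℂ) :
      ℂ[X] →+* Matrix (Fin m) (Fin m) ℂ).toMonoidHom
  have hgdef : ∀ p : ℂ[X], g p = (aeval (-Aᵀ) p).det := fun p => rfl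
  have hfactor : q = (q.roots.map fun r => X - C r).prod :=
    ((IsAlgClosed.splits q).eq_prod_roots_of_monic (Matrix.charpoly_monic A))
  have hdet : (aeval (-Aᵀ) q).det = (q.roots.map fun r => q.eval (-r)).prod := by
    rw [← hgdef]
    conv_lhs => rw [hfactor]
    rw [map_multiset_prod, Multiset.map_map]
    congr 1
    apply Multiset.map_congr rfl
    intro r hr
    have : (aeval (-Aᵀ)) (X - C r) = ((-r) • (1 : Matrix (Fin m) (Fin m) ℂ) - A)ᵀ := by
      rw [map_sub, aeval_X, aeval_C, Algebra.algebraMap_eq_smul_one]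
      rw [Matrix.transpose_sub, Matrix.transpose_smul, Matrix.transpose_one]
      rw [neg_smul]
      abel
    rw [Function.comp_apply, hgdef, this, Matrix.det_transpose, ← charpoly_eval']
  have hdetne : (aeval (-Aᵀ) q).det ≠ 0 := by
    rw [hdet]
    apply Multiset.prod_ne_zero
    rw [Multiset.mem_map]
    rintro ⟨r, hr, hr0⟩
    have hrne : q ≠ 0 := (Matrix.charpoly_monic A).ne_zero
    have h1 : r ∈ spectrum ℂ A :=
      (mem_spectrum_iff_eval' A r).mpr ((Polynomial.mem_roots hrne).mp hr)
    have h2 : (-r) ∈ spectrum ℂ A := (mem_spectrum_iff_eval' A (-r)).mpr hr0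
    have := hspec r h1
    have := hspec (-r) h2
    simp only [Complex.neg_re] at this
    linarith
  have hunit : IsUnit (aeval (-Aᵀ) q) := by
    rw [Matrix.isUnit_iff_isUnit_det, isUnit_iff_ne_zero]
    exact hdetne
  have hQc0 : Qc = 0 := by
    obtain ⟨u, hu⟩ := hunit
    calc Qc = Qc * (↑u * ↑u⁻¹) := by rw [Units.mul_inv, mul_one]
      _ = Qc * (aeval (-Aᵀ) q) * ↑u⁻¹ := by rw [hu, mul_assoc]
      _ = 0 := by rw [h0, zero_mul]
  have hQ0 : Q = 0 := by
    ext i j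
    have : Qc i j = 0 := by rw [hQc0]; rfl
    simpa [hQc, φ, RingHom.mapMatrix_apply, Matrix.map_apply] using this
  rw [hQdef] at hQ0
  exact sub_eq_zero.mp hQ0


/-- A real square matrix is *stable* if every eigenvalue (over ℂ) has negative real part. -/
def Matrix.IsStableMat {m : ℕ} (B : Matrix (Fin m) (Fin m) ℝ) : Prop :=
  ∀ z ∈ spectrum ℂ (B.map Complex.ofReal), z.re < 0

/-- Let `B` be a stable `m×m` real matrix and `R` an `m×m` real matrix.
Then the algebraic Lyapunov equation `BP + PBᵀ + R = 0` has at most one solution `P`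
among `m×m` real matrices. -/
theorem lyapunov_unique {m : ℕ} (B R : Matrix (Fin m) (Fin m) ℝ) (hB : B.IsStableMat) :
    ∀ P₁ P₂ : Matrix (Fin m) (Fin m) ℝ,
      B * P₁ + P₁ * Bᵀ + R = 0 → B * P₂ + P₂ * Bᵀ + R = 0 → P₁ = P₂ :=
  lyapunov_unique' B R hB
end

section
/- Suppose the (k+1)×(k+1) real matrix U satisfies the algebraic Riccati equation aU + Uaᵀ + 𝔟𝔟ᵀ − U AᵀA U = 0. Let γ > 0 and σ > 0, and define the (k+1)×(k+1) matrix Q by Q_{ij} = σ² (γ/σ)^{(i+j+1)/(k+1)} U_{ij} for i,j = 0,…,k. Then Q satisfies the algebraic Riccati equation aQ + Qaᵀ + γ²𝔟𝔟ᵀ − (1/σ²) Q AᵀA Q = 0. -/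
open Matrix

/-- Suppose the `(k+1)×(k+1)` real matrix `U` satisfies the algebraic
Riccati equation `aU + Uaᵀ + 𝔟𝔟ᵀ − U AᵀA U = 0`. Let `γ > 0` and `σ > 0`, and define
`Q` by `Q_{ij} = σ² (γ/σ)^{(i+j+1)/(k+1)} U_{ij}`. Then `Q` satisfies the algebraic
Riccati equation `aQ + Qaᵀ + γ²𝔟𝔟ᵀ − (1/σ²) Q AᵀA Q = 0`. Here `a` is the shift
matrix, `A = (1,0,…,0)` and `𝔟 = (0,…,0,1)ᵀ`; real exponents use `Real.rpow`. -/
theorem riccati_scaling (k : ℕ) (U : Matrix (Fin (k + 1)) (Fin (k + 1)) ℝ)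
    (hU : (Matrix.of fun i j : Fin (k + 1) =>
          if (j : ℕ) = (i : ℕ) + 1 then (1 : ℝ) else 0) * U +
        U * (Matrix.of fun i j : Fin (k + 1) =>
          if (j : ℕ) = (i : ℕ) + 1 then (1 : ℝ) else 0)ᵀ +
        (Matrix.of fun (l : Fin (k + 1)) (_ : Fin 1) => if (l : ℕ) = k then (1 : ℝ) else 0) *
          (Matrix.of fun (l : Fin (k + 1)) (_ : Fin 1) => if (l : ℕ) = k then (1 : ℝ) else 0)ᵀ -
        U * (Matrix.of fun (_ : Fin 1) (l : Fin (k + 1)) => if l = 0 then (1 : ℝ) else 0)ᵀ *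
          (Matrix.of fun (_ : Fin 1) (l : Fin (k + 1)) => if l = 0 then (1 : ℝ) else 0) * U = 0)
    (γ σ : ℝ) (hγ : 0 < γ) (hσ : 0 < σ) :
    (Matrix.of fun i j : Fin (k + 1) =>
        if (j : ℕ) = (i : ℕ) + 1 then (1 : ℝ) else 0) *
      (Matrix.of fun i j : Fin (k + 1) =>
        σ ^ 2 * (γ / σ) ^ ((((i : ℕ) : ℝ) + ((j : ℕ) : ℝ) + 1) / ((k : ℝ) + 1)) * U i j) +
    (Matrix.of fun i j : Fin (k + 1) =>
        σ ^ 2 * (γ / σ) ^ ((((i : ℕ) : ℝ) + ((j : ℕ) : ℝ) + 1) / ((k : ℝ) + 1)) * U i j) *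
      (Matrix.of fun i j : Fin (k + 1) =>
        if (j : ℕ) = (i : ℕ) + 1 then (1 : ℝ) else 0)ᵀ +
    γ ^ 2 •
      ((Matrix.of fun (l : Fin (k + 1)) (_ : Fin 1) => if (l : ℕ) = k then (1 : ℝ) else 0) *
        (Matrix.of fun (l : Fin (k + 1)) (_ : Fin 1) => if (l : ℕ) = k then (1 : ℝ) else 0)ᵀ) -
    (1 / σ ^ 2) •
      ((Matrix.of fun i j : Fin (k + 1) =>
          σ ^ 2 * (γ / σ) ^ ((((i : ℕ) : ℝ) + ((j : ℕ) : ℝ) + 1) / ((k : ℝ) + 1)) * U i j) *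
        (Matrix.of fun (_ : Fin 1) (l : Fin (k + 1)) => if l = 0 then (1 : ℝ) else 0)ᵀ *
        (Matrix.of fun (_ : Fin 1) (l : Fin (k + 1)) => if l = 0 then (1 : ℝ) else 0) *
        (Matrix.of fun i j : Fin (k + 1) =>
          σ ^ 2 * (γ / σ) ^ ((((i : ℕ) : ℝ) + ((j : ℕ) : ℝ) + 1) / ((k : ℝ) + 1)) * U i j)) =
    0 := by
  have hσ' : σ ≠ 0 := ne_of_gt hσ
  have hc : (0:ℝ) < γ / σ := div_pos hγ hσ
  have key := Matrix.ext_iff.mpr hU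
  ext i j
  have key' := key i j
  simp only [Matrix.add_apply, Matrix.sub_apply, Matrix.smul_apply, Matrix.mul_apply,
    Matrix.transpose_apply, Matrix.of_apply, Matrix.zero_apply, smul_eq_mul,
    Fin.sum_univ_one, ite_mul, mul_ite, one_mul, mul_one, zero_mul, mul_zero,
    Finset.sum_ite_eq', Finset.mem_univ, if_true, Fin.val_zero, Nat.cast_zero] at key' ⊢
  set C : ℝ := σ ^ 2 * (γ / σ) ^ ((((i:ℕ):ℝ) + ((j:ℕ):ℝ) + 2) / ((k:ℝ) + 1)) with hC
  have h1 : (∑ x : Fin (k + 1), if (x:ℕ) = (i:ℕ) + 1 then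
      σ ^ 2 * (γ / σ) ^ ((((x:ℕ):ℝ) + ((j:ℕ):ℝ) + 1) / ((k:ℝ) + 1)) * U x j else 0)
      = C * ∑ x : Fin (k + 1), if (x:ℕ) = (i:ℕ) + 1 then U x j else 0 := by
    rw [Finset.mul_sum]
    refine Finset.sum_congr rfl fun x _ => ?_
    split_ifs with h
    · have : (((x:ℕ):ℝ) + ((j:ℕ):ℝ) + 1) / ((k:ℝ) + 1)
          = (((i:ℕ):ℝ) + ((j:ℕ):ℝ) + 2) / ((k:ℝ) + 1) := by
        rw [h]; push_cast; ring
      rw [this, hC]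
    · simp
  have h2 : (∑ x : Fin (k + 1), if (x:ℕ) = (j:ℕ) + 1 then
      σ ^ 2 * (γ / σ) ^ ((((i:ℕ):ℝ) + ((x:ℕ):ℝ) + 1) / ((k:ℝ) + 1)) * U i x else 0)
      = C * ∑ x : Fin (k + 1), if (x:ℕ) = (j:ℕ) + 1 then U i x else 0 := by
    rw [Finset.mul_sum]
    refine Finset.sum_congr rfl fun x _ => ?_
    split_ifs with h
    · have : (((i:ℕ):ℝ) + ((x:ℕ):ℝ) + 1) / ((k:ℝ) + 1)
          = (((i:ℕ):ℝ) + ((j:ℕ):ℝ) + 2) / ((k:ℝ) + 1) := by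
        rw [h]; push_cast; ring
      rw [this, hC]
    · simp
  have h3 : (if (j:ℕ) = k then if (i:ℕ) = k then γ ^ 2 else 0 else 0)
      = C * (if (j:ℕ) = k then if (i:ℕ) = k then (1:ℝ) else 0 else 0) := by
    split_ifs with hj hi
    · have : ((((i:ℕ):ℝ) + ((j:ℕ):ℝ) + 2) / ((k:ℝ) + 1)) = (2:ℝ) := by
        rw [hi, hj]
        field_simp
        ring
      rw [hC, this, Real.rpow_two, div_pow, mul_one]
      field_simp
    · simp
    · simp
  have h4 : 1 / σ ^ 2 *
        (σ ^ 2 * (γ / σ) ^ ((((i:ℕ):ℝ) + 0 + 1) / ((k:ℝ) + 1)) * U i 0 *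
          (σ ^ 2 * (γ / σ) ^ ((0 + ((j:ℕ):ℝ) + 1) / ((k:ℝ) + 1)) * U 0 j))
      = C * (U i 0 * U 0 j) := by
    have hadd : (γ / σ) ^ ((((i:ℕ):ℝ) + 0 + 1) / ((k:ℝ) + 1)) *
        (γ / σ) ^ ((0 + ((j:ℕ):ℝ) + 1) / ((k:ℝ) + 1))
        = (γ / σ) ^ ((((i:ℕ):ℝ) + ((j:ℕ):ℝ) + 2) / ((k:ℝ) + 1)) := by
      rw [← Real.rpow_add hc]
      ring_nf
    rw [hC]
    field_simp
    rw [← hadd]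
    ring_nf
  rw [h1, h2, h3, h4]
  linear_combination C * key'
end

section
/- Let γ > 0 and σ > 0, and suppose Q is a symmetric positive-definite (k+1)×(k+1) real matrix satisfying the algebraic Riccati equation aQ + Qaᵀ + γ²𝔟𝔟ᵀ − (1/σ²) Q AᵀA Q = 0. Set q = (1/σ²) Q Aᵀ ∈ ℝ^{k+1}. Then the matrix a − qA is stable, i.e. every eigenvalue of a − qA over ℂ has negative real part. -/
open Matrix

/-- The shift matrix `a` with `(i,j)` entry `1` iff `j = i+1`. -/
def shiftMat (k : ℕ) : Matrix (Fin (k + 1)) (Fin (k + 1)) ℝ :=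
  Matrix.of fun i j => if (j : ℕ) = (i : ℕ) + 1 then 1 else 0

/-- The `1×(k+1)` row matrix `A = (1,0,…,0)`. -/
def rowA (k : ℕ) : Matrix (Fin 1) (Fin (k + 1)) ℝ :=
  Matrix.of fun _ j => if j = 0 then 1 else 0

/-- The `(k+1)×1` column matrix `𝔟 = (0,…,0,1)ᵀ`. -/
def colb (k : ℕ) : Matrix (Fin (k + 1)) (Fin 1) ℝ :=
  Matrix.of fun i _ => if (i : ℕ) = k then 1 else 0

section Aux

lemma exists_eigvec {n : ℕ} (M : Matrix (Fin n) (Fin n) ℂ) {z : ℂ}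
    (hz : z ∈ spectrum ℂ M) : ∃ v : Fin n → ℂ, v ≠ 0 ∧ Mᵀ *ᵥ v = z • v := by
  rw [spectrum.mem_iff] at hz
  have hdet : (algebraMap ℂ _ z - M).det = 0 := by
    by_contra h
    exact hz ((Matrix.isUnit_iff_isUnit_det _).mpr (isUnit_iff_ne_zero.mpr h))
  have hdet' : (algebraMap ℂ (Matrix (Fin n) (Fin n) ℂ) z - Mᵀ).det = 0 := by
    have : (algebraMap ℂ (Matrix (Fin n) (Fin n) ℂ) z - Mᵀ) = (algebraMap ℂ _ z - M)ᵀ := by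
      simp [Matrix.algebraMap_eq_diagonal, Matrix.transpose_sub, Matrix.diagonal_transpose]
    rw [this, Matrix.det_transpose, hdet]
  obtain ⟨v, hv0, hv⟩ := (Matrix.exists_mulVec_eq_zero_iff).mpr hdet'
  refine ⟨v, hv0, ?_⟩
  rw [Matrix.sub_mulVec] at hv
  have h2 : (algebraMap ℂ (Matrix (Fin n) (Fin n) ℂ) z) *ᵥ v = z • v := by
    ext i; simp [Matrix.algebraMap_eq_diagonal, Matrix.mulVec_diagonal, Pi.algebraMap_apply]
  rw [h2] at hv
  linear_combination (norm := module) -hv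

lemma re_quad {n : ℕ} (Q : Matrix (Fin n) (Fin n) ℝ) (v : Fin n → ℂ) :
    (star v ⬝ᵥ (Q.map Complex.ofReal) *ᵥ v).re =
      (fun i => (v i).re) ⬝ᵥ Q *ᵥ (fun i => (v i).re)
      + (fun i => (v i).im) ⬝ᵥ Q *ᵥ (fun i => (v i).im) := by
  simp only [dotProduct, mulVec, Matrix.map_apply, Pi.star_apply]
  rw [← Finset.sum_add_distrib, Complex.re_sum]
  refine Finset.sum_congr rfl fun i _ => ?_
  simp only [Finset.mul_sum, Complex.re_sum, ← Finset.sum_add_distrib]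
  refine Finset.sum_congr rfl fun j _ => ?_
  simp [Complex.mul_re, Complex.mul_im]

lemma re_quad_pos {n : ℕ} (Q : Matrix (Fin n) (Fin n) ℝ) (hpos : Q.PosDef)
    {v : Fin n → ℂ} (hv : v ≠ 0) :
    0 < (star v ⬝ᵥ (Q.map Complex.ofReal) *ᵥ v).re := by
  rw [re_quad]
  set x : Fin n → ℝ := fun i => (v i).re
  set y : Fin n → ℝ := fun i => (v i).im
  have hxy : x ≠ 0 ∨ y ≠ 0 := by
    by_contra h
    push_neg at h
    exact hv (funext fun i => Complex.ext (congrFun h.1 i) (congrFun h.2 i))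
  rcases hxy with hx | hy
  · have h1 := hpos.dotProduct_mulVec_pos hx
    have h2 := hpos.posSemidef.dotProduct_mulVec_nonneg y
    simp only [RCLike.re_to_real, star_trivial] at h1 h2 ⊢
    linarith
  · have h1 := hpos.dotProduct_mulVec_pos hy
    have h2 := hpos.posSemidef.dotProduct_mulVec_nonneg x
    simp only [RCLike.re_to_real, star_trivial] at h1 h2 ⊢
    linarith

lemma mapC_mul {l m n : ℕ} (M : Matrix (Fin l) (Fin m) ℝ) (N : Matrix (Fin m) (Fin n) ℝ) :
    (M * N).map Complex.ofReal = M.map Complex.ofReal * N.map Complex.ofReal := by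
  ext i j; simp [Matrix.mul_apply]

lemma mapC_add {m n : ℕ} (M N : Matrix (Fin m) (Fin n) ℝ) :
    (M + N).map Complex.ofReal = M.map Complex.ofReal + N.map Complex.ofReal := by
  ext i j; simp

lemma mapC_sub {m n : ℕ} (M N : Matrix (Fin m) (Fin n) ℝ) :
    (M - N).map Complex.ofReal = M.map Complex.ofReal - N.map Complex.ofReal := by
  ext i j; simp

lemma mapC_smul {m n : ℕ} (r : ℝ) (M : Matrix (Fin m) (Fin n) ℝ) :
    (r • M).map Complex.ofReal = (r : ℂ) • M.map Complex.ofReal := by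
  ext i j; simp

lemma mapC_transpose {m n : ℕ} (M : Matrix (Fin m) (Fin n) ℝ) :
    Mᵀ.map Complex.ofReal = (M.map Complex.ofReal)ᵀ := by
  ext i j; simp

lemma mapC_mulVec_star {m n : ℕ} (M : Matrix (Fin m) (Fin n) ℝ) (v : Fin n → ℂ) :
    (M.map Complex.ofReal) *ᵥ (star v) = star ((M.map Complex.ofReal) *ᵥ v) := by
  ext i
  simp only [Matrix.mulVec, dotProduct, Pi.star_apply, Matrix.map_apply]
  rw [show (star (∑ j, (M i j : ℂ) * v j)) = (starRingEnd ℂ) (∑ j, (M i j : ℂ) * v j) from rfl,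
    map_sum]
  refine Finset.sum_congr rfl fun j _ => ?_
  simp [Complex.conj_ofReal, mul_comm]

end Aux

/-- Let `γ > 0` and `σ > 0`, and suppose `Q` is a symmetric
positive-definite `(k+1)×(k+1)` real matrix satisfying the algebraic Riccati equation
`aQ + Qaᵀ + γ²𝔟𝔟ᵀ − (1/σ²) Q AᵀA Q = 0`.  Set `q = (1/σ²) Q Aᵀ ∈ ℝ^{k+1}`.  Then
the matrix `a − qA` is stable, i.e. every eigenvalue of `a − qA` over ℂ has negative
real part. -/
theorem riccati_gain_stable (k : ℕ) (γ σ : ℝ) (hγ : 0 < γ) (hσ : 0 < σ)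
    (Q : Matrix (Fin (k + 1)) (Fin (k + 1)) ℝ) (hsym : Q.IsSymm) (hpos : Q.PosDef)
    (hric : shiftMat k * Q + Q * (shiftMat k)ᵀ + γ ^ 2 • (colb k * (colb k)ᵀ) -
      (1 / σ ^ 2) • (Q * (rowA k)ᵀ * rowA k * Q) = 0) :
    ∀ z ∈ spectrum ℂ
      ((shiftMat k -
        Matrix.vecMulVec (fun j => (1 / σ ^ 2) * (Q * (rowA k)ᵀ) j 0)
          (fun j => rowA k 0 j)).map Complex.ofReal),
      z.re < 0 := by
  intro z hz
  set c : ℝ := 1 / σ ^ 2 with hc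
  have hc0 : 0 < c := by positivity
  have hG : Matrix.vecMulVec (fun j => c * (Q * (rowA k)ᵀ) j 0) (fun j => rowA k 0 j)
      = c • (Q * (rowA k)ᵀ * rowA k) := by
    ext i j
    simp only [Matrix.vecMulVec_apply, Matrix.smul_apply, smul_eq_mul]
    rw [show (Q * (rowA k)ᵀ * rowA k) i j = (Q * (rowA k)ᵀ) i 0 * rowA k 0 j from by
      rw [Matrix.mul_apply, Fin.sum_univ_one]]
    ring
  rw [hG] at hz
  set F : Matrix (Fin (k+1)) (Fin (k+1)) ℝ := shiftMat k - c • (Q * (rowA k)ᵀ * rowA k)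
    with hFdef
  have ht : (c • (Q * (rowA k)ᵀ * rowA k))ᵀ = c • ((rowA k)ᵀ * rowA k * Q) := by
    rw [Matrix.transpose_smul, Matrix.transpose_mul, Matrix.transpose_mul,
      Matrix.transpose_transpose, hsym]
    rw [Matrix.mul_assoc]
  have E : F * Q + Q * Fᵀ = -(γ^2 • (colb k * (colb k)ᵀ)) - c • (Q * (rowA k)ᵀ * rowA k * Q) := by
    rw [← sub_eq_zero, ← hric]
    rw [hFdef, Matrix.sub_mul, Matrix.transpose_sub, Matrix.mul_sub, ht,
      Matrix.smul_mul, Matrix.mul_smul]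
    rw [show Q * ((rowA k)ᵀ * rowA k * Q) = Q * (rowA k)ᵀ * rowA k * Q from by
      simp [Matrix.mul_assoc]]
    abel
  -- complexified matrices
  set Qc := Q.map Complex.ofReal with hQc
  set Ac := (rowA k).map Complex.ofReal with hAc
  set bc := (colb k).map Complex.ofReal with hbc
  set Fc := F.map Complex.ofReal with hFc
  have EC : Fc * Qc + Qc * Fcᵀ
      = -(((γ^2 : ℝ) : ℂ) • (bc * bcᵀ)) - ((c : ℝ) : ℂ) • (Qc * Acᵀ * Ac * Qc) := by
    rw [hFc, hQc, hAc, hbc]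
    rw [← mapC_transpose, ← mapC_mul, ← mapC_mul, ← mapC_add, E]
    ext i j
    simp only [Matrix.map_apply, Matrix.sub_apply, Matrix.neg_apply, Matrix.smul_apply,
      Matrix.mul_apply, Matrix.transpose_apply, smul_eq_mul]
    push_cast
    ring_nf
  obtain ⟨v, hv0, hveig⟩ := exists_eigvec Fc hz
  set S : ℂ := star v ⬝ᵥ Qc *ᵥ v with hS
  have h1 : star v ⬝ᵥ ((Fc * Qc) *ᵥ v) = (starRingEnd ℂ) z * S := by
    rw [← Matrix.mulVec_mulVec, Matrix.dotProduct_mulVec]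
    have hvm : star v ᵥ* Fc = (starRingEnd ℂ) z • star v := by
      rw [← Matrix.mulVec_transpose, ← mapC_transpose, mapC_mulVec_star, mapC_transpose]
      rw [show (F.map Complex.ofReal)ᵀ *ᵥ v = z • v from hveig]
      ext i
      simp [star_mul']
    rw [hvm, smul_dotProduct, smul_eq_mul, hS, Matrix.dotProduct_mulVec]
  have h2 : star v ⬝ᵥ ((Qc * Fcᵀ) *ᵥ v) = z * S := by
    rw [← Matrix.mulVec_mulVec, hveig, Matrix.mulVec_smul, dotProduct_smul, smul_eq_mul]
  set β : ℂ := v (Fin.last k) with hβ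
  set w : ℂ := (Qc *ᵥ v) 0 with hw
  have hcond : ∀ j : Fin (k+1), ((j : ℕ) = k) ↔ j = Fin.last k := by
    intro j
    constructor
    · intro h; exact Fin.ext (by simp [h, Fin.val_last])
    · intro h; simp [h, Fin.val_last]
  have h3 : star v ⬝ᵥ ((bc * bcᵀ) *ᵥ v) = star β * β := by
    have hb : ∀ i j, (bc * bcᵀ) i j
        = (if i = Fin.last k then 1 else 0) * (if j = Fin.last k then 1 else 0) := by
      intro i j
      rw [Matrix.mul_apply, Fin.sum_univ_one]
      simp [hbc, colb, Matrix.map_apply, apply_ite Complex.ofReal, hcond]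
    simp only [Matrix.mulVec, dotProduct, hb, Pi.star_apply]
    simp [ite_mul, mul_ite, Finset.sum_ite_eq', Finset.mul_sum, mul_comm]
    rfl
  have h4 : star v ⬝ᵥ ((Qc * Acᵀ * Ac * Qc) *ᵥ v) = star w * w := by
    have hassoc : Qc * Acᵀ * Ac * Qc = (Qc * Acᵀ) * (Ac * Qc) := by
      rw [Matrix.mul_assoc]
    rw [hassoc, ← Matrix.mulVec_mulVec, Matrix.dotProduct_mulVec]
    have hV : (Ac * Qc) *ᵥ v = fun _ => w := by
      funext m
      have hm : m = 0 := Subsingleton.elim m 0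
      subst hm
      simp only [Matrix.mulVec, dotProduct, Matrix.mul_apply, hAc, hQc, Matrix.map_apply,
        rowA, Matrix.of_apply, apply_ite Complex.ofReal]
      rw [hw]
      simp [Matrix.mulVec, dotProduct, hQc, Matrix.map_apply, ite_mul, Finset.sum_ite_eq']
    have hU : star v ᵥ* (Qc * Acᵀ) = fun _ => star w := by
      funext m
      simp only [Matrix.vecMul, dotProduct, Matrix.mul_apply, Fin.sum_univ_one,
        Matrix.transpose_apply, hAc, hQc, Matrix.map_apply, rowA, Matrix.of_apply,
        apply_ite Complex.ofReal, Pi.star_apply]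
      rw [hw]
      simp only [Matrix.mulVec, dotProduct, hQc, Matrix.map_apply]
      rw [show star (∑ j, (Q 0 j : ℂ) * v j) = (starRingEnd ℂ) (∑ j, (Q 0 j : ℂ) * v j) from rfl,
        map_sum]
      simp only [ite_mul, mul_ite, mul_one, mul_zero, one_mul, zero_mul, Finset.sum_ite_eq',
        Finset.mem_univ, if_true]
      refine Finset.sum_congr rfl fun i _ => ?_
      have hQsym : Q 0 i = Q i 0 := by
        have h' := congrFun (congrFun hsym 0) i
        rw [Matrix.transpose_apply] at h'
        exact h'.symm
      simp [star_mul', Complex.conj_ofReal, hQsym, mul_comm]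
    rw [hU, hV]
    simp [dotProduct, Fin.sum_univ_one]
  have hquad := congrArg (fun M : Matrix (Fin (k+1)) (Fin (k+1)) ℂ => star v ⬝ᵥ (M *ᵥ v)) EC
  simp only [Matrix.add_mulVec, Matrix.sub_mulVec, Matrix.neg_mulVec, Matrix.smul_mulVec,
    dotProduct_add, dotProduct_sub, dotProduct_neg, dotProduct_smul,
    smul_eq_mul] at hquad
  rw [h1, h2, h3, h4] at hquad
  rw [show star β = (starRingEnd ℂ) β from rfl, ← Complex.normSq_eq_conj_mul_self] at hquad
  rw [show star w = (starRingEnd ℂ) w from rfl, ← Complex.normSq_eq_conj_mul_self] at hquad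
  rw [← add_mul, add_comm ((starRingEnd ℂ) z) z, Complex.add_conj] at hquad
  have hre := congrArg Complex.re hquad
  simp only [Complex.re_ofReal_mul, Complex.sub_re, Complex.neg_re, Complex.ofReal_re,
    ← Complex.ofReal_mul] at hre
  -- hre : 2 * z.re * S.re = -(γ^2 * normSq β) - c * normSq w
  have hSpos : 0 < S.re := by rw [hS, hQc]; exact re_quad_pos Q hpos hv0
  by_contra hcon
  push_neg at hcon
  have e1 : 0 ≤ γ^2 * Complex.normSq β := mul_nonneg (by positivity) (Complex.normSq_nonneg _)
  have e2 : 0 ≤ c * Complex.normSq w := mul_nonneg (le_of_lt hc0) (Complex.normSq_nonneg _)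
  have e3 : 0 ≤ 2 * z.re * S.re := by positivity
  have hβ0 : β = 0 := by
    have : γ^2 * Complex.normSq β = 0 := by linarith
    have := (mul_eq_zero.mp this).resolve_left (by positivity)
    exact Complex.normSq_eq_zero.mp this
  have hw0 : w = 0 := by
    have : c * Complex.normSq w = 0 := by linarith
    have := (mul_eq_zero.mp this).resolve_left (ne_of_gt hc0)
    exact Complex.normSq_eq_zero.mp this
  -- the eigenvector v must then be zero, a contradiction
  apply hv0
  -- first: v is an eigenvector of the pure shift transpose
  have h5 : (Acᵀ * Ac * Qc) *ᵥ v = 0 := by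
    rw [Matrix.mul_assoc, ← Matrix.mulVec_mulVec, ← Matrix.mulVec_mulVec]
    have hAQ : Ac *ᵥ (Qc *ᵥ v) = 0 := by
      funext m
      have hm : m = 0 := Subsingleton.elim m 0
      subst hm
      simp only [Matrix.mulVec, dotProduct, hAc, Matrix.map_apply, rowA, Matrix.of_apply,
        apply_ite Complex.ofReal, ite_mul, one_mul, zero_mul, Complex.ofReal_one,
        Complex.ofReal_zero, Finset.sum_ite_eq', Finset.mem_univ, if_true]
      exact hw0
    rw [hAQ, Matrix.mulVec_zero]
  have haeig : ((shiftMat k).map Complex.ofReal)ᵀ *ᵥ v = z • v := by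
    have hFt : Fcᵀ = ((shiftMat k).map Complex.ofReal)ᵀ - ((c:ℝ):ℂ) • (Acᵀ * Ac * Qc) := by
      rw [hFc, hFdef, mapC_sub, Matrix.transpose_sub]
      congr 1
      rw [← mapC_transpose, ht, mapC_smul, mapC_mul, mapC_mul, mapC_transpose, ← hAc, ← hQc]
    rw [hFt, Matrix.sub_mulVec, Matrix.smul_mulVec, h5, smul_zero, sub_zero] at hveig
    exact hveig
  -- compute the shift-transpose action
  have hsum0 : ∀ (h : 0 < k+1), (((shiftMat k).map Complex.ofReal)ᵀ *ᵥ v) ⟨0, h⟩ = 0 := by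
    intro h
    simp [Matrix.mulVec, dotProduct, shiftMat, Matrix.map_apply, Matrix.transpose_apply]
  have hsum : ∀ (m : ℕ) (h : m + 1 < k + 1),
      (((shiftMat k).map Complex.ofReal)ᵀ *ᵥ v) ⟨m+1, h⟩ = v ⟨m, by omega⟩ := by
    intro m h
    simp only [Matrix.mulVec, dotProduct, Matrix.transpose_apply, Matrix.map_apply, shiftMat,
      Matrix.of_apply]
    rw [Finset.sum_eq_single (⟨m, by omega⟩ : Fin (k+1))]
    · simp
    · intro j _ hj
      have : ¬((m+1 : ℕ) = (j : ℕ) + 1) := by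
        intro hcn
        exact hj (Fin.ext (show (j:ℕ) = m by omega))
      simp [this]
      exact Or.inl (by omega)
    · intro h'
      exact absurd (Finset.mem_univ _) h'
  have hall : ∀ (m : ℕ) (h : m < k + 1), v ⟨m, h⟩ = 0 := by
    rcases eq_or_ne z 0 with hz0 | hz0
    · intro m h
      rcases eq_or_lt_of_le (Nat.lt_succ_iff.mp h) with hm | hm
      · have : (⟨m, h⟩ : Fin (k+1)) = Fin.last k := Fin.ext (by simp [hm, Fin.val_last])
        rw [this, ← hβ, hβ0]
      · have h' : m + 1 < k + 1 := by omega
        have hx := congrFun haeig ⟨m+1, h'⟩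
        rw [hsum m h'] at hx
        simpa [hz0] using hx
    · intro m
      induction m with
      | zero =>
        intro h
        have hx := congrFun haeig ⟨0, h⟩
        rw [hsum0 h] at hx
        have : z * v ⟨0, h⟩ = 0 := by
          simpa [Pi.smul_apply, smul_eq_mul] using hx.symm
        exact (mul_eq_zero.mp this).resolve_left hz0
      | succ m ih =>
        intro h
        have h' : m < k + 1 := by omega
        have hx := congrFun haeig ⟨m+1, h⟩
        rw [hsum m h, ih h'] at hx
        have : z * v ⟨m+1, h⟩ = 0 := by
          simpa [Pi.smul_apply, smul_eq_mul] using hx.symm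
        exact (mul_eq_zero.mp this).resolve_left hz0
  funext i
  have := hall i i.isLt
  simpa using this
end

section
/- Let γ > 0 and σ > 0. Suppose Q_γ is a symmetric (k+1)×(k+1) real matrix satisfying aQ_γ + Q_γaᵀ + γ²𝔟𝔟ᵀ − (1/σ²) Q_γ AᵀA Q_γ = 0, and set q_* = (1/σ²) Q_γ Aᵀ. Let q ∈ ℝ^{k+1} be any column vector such that a − qA is stable, and let Q_q be a symmetric (k+1)×(k+1) real matrix satisfying the Lyapunov equation (a − qA)Q_q + Q_q(a − qA)ᵀ + σ²qqᵀ + γ²𝔟𝔟ᵀ = 0. Then Q_q − Q_γ is positive semidefinite. -/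
open Matrix

section Decay

open Matrix Filter NormedSpace Topology
open scoped Nat

variable {n : Type*} [Fintype n] [DecidableEq n]

/-- `M ↦ M *ᵥ v` as a continuous linear map. -/
noncomputable def mulVecCLM (𝕜 : Type*) [NontriviallyNormedField 𝕜] [CompleteSpace 𝕜]
    (v : n → 𝕜) : Matrix n n 𝕜 →L[𝕜] (n → 𝕜) :=
  { toLinearMap :=
      { toFun := fun M => M *ᵥ v
        map_add' := fun A B => Matrix.add_mulVec A B v
        map_smul' := fun c A => Matrix.smul_mulVec c A v }
    cont := continuous_id.matrix_mulVec continuous_const }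

@[simp] lemma mulVecCLM_apply (𝕜 : Type*) [NontriviallyNormedField 𝕜] [CompleteSpace 𝕜]
    (v : n → 𝕜) (M : Matrix n n 𝕜) : mulVecCLM 𝕜 v M = M *ᵥ v := rfl

lemma exp_scalar_matrix (c : ℂ) :
    exp (c • (1 : Matrix n n ℂ)) = Complex.exp c • (1 : Matrix n n ℂ) := by
  letI := Matrix.linftyOpNormedAddCommGroup (m := n) (n := n) (α := ℂ)
  letI := Matrix.linftyOpNormedRing (n := n) (α := ℂ)
  letI := Matrix.linftyOpNormedAlgebra (n := n) (R := ℂ) (α := ℂ)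
  haveI : CompleteSpace (Matrix n n ℂ) :=
    inferInstance
  have h := algebraMap_exp_comm (𝕂 := ℂ) (𝔸 := Matrix n n ℂ) c
  rw [Algebra.algebraMap_eq_smul_one, Algebra.algebraMap_eq_smul_one] at h
  rw [Complex.exp_eq_exp_ℂ]
  exact h.symm

lemma expSummable (X : Matrix n n ℂ) :
    Summable fun j : ℕ => ((j ! : ℂ)⁻¹) • X ^ j := by
  letI := Matrix.linftyOpNormedAddCommGroup (m := n) (n := n) (α := ℂ)
  letI := Matrix.linftyOpNormedRing (n := n) (α := ℂ)
  letI := Matrix.linftyOpNormedAlgebra (n := n) (R := ℂ) (α := ℂ)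
  haveI : CompleteSpace (Matrix n n ℂ) :=
    inferInstance
  exact expSeries_summable' X

lemma tendsto_exp_smul_mulVec_of_genEig (M : Matrix n n ℂ) (μ : ℂ) (hμ : μ.re < 0)
    (v : n → ℂ) (m : ℕ) (hv : ((M - μ • 1) ^ m) *ᵥ v = 0) :
    Tendsto (fun t : ℝ => exp ((t : ℂ) • M) *ᵥ v) atTop (𝓝 0) := by
  set N := M - μ • (1 : Matrix n n ℂ) with hN
  have hNv : ∀ j, m ≤ j → (N ^ j) *ᵥ v = 0 := by
    intro j hj
    obtain ⟨l, rfl⟩ := Nat.exists_eq_add_of_le hj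
    have hpow : N ^ (m + l) = N ^ l * N ^ m := by rw [← pow_add, add_comm]
    rw [hpow, ← Matrix.mulVec_mulVec, hv, Matrix.mulVec_zero]
  have hsplit : ∀ t : ℝ, exp ((t : ℂ) • M) *ᵥ v
      = ∑ j ∈ Finset.range m,
          (Complex.exp ((t : ℂ) * μ) * ((t : ℂ) ^ j * (j ! : ℂ)⁻¹)) • ((N ^ j) *ᵥ v) := by
    intro t
    have hMsum : (t : ℂ) • M = ((t : ℂ) * μ) • (1 : Matrix n n ℂ) + (t : ℂ) • N := by
      rw [hN]; module
    have hcomm : Commute (((t : ℂ) * μ) • (1 : Matrix n n ℂ)) ((t : ℂ) • N) :=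
      ((Commute.one_left _).smul_left _).smul_right _
    rw [hMsum, Matrix.exp_add_of_commute _ _ hcomm, exp_scalar_matrix,
      smul_mul_assoc, one_mul, Matrix.smul_mulVec]
    have h2 : exp ((t : ℂ) • N) *ᵥ v
        = ∑ j ∈ Finset.range m, ((t : ℂ) ^ j * (j ! : ℂ)⁻¹) • ((N ^ j) *ᵥ v) := by
      have hsum : Summable fun j : ℕ => ((j ! : ℂ)⁻¹) • ((t : ℂ) • N) ^ j :=
        expSummable _
      have hmap : exp ((t : ℂ) • N) *ᵥ v
          = ∑' j : ℕ, mulVecCLM ℂ v (((j ! : ℂ)⁻¹) • ((t : ℂ) • N) ^ j) := by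
        simp only [exp_eq_tsum ℂ]
        exact ((mulVecCLM ℂ v).map_tsum hsum)
      rw [hmap, tsum_eq_sum (s := Finset.range m) ?_]
      · apply Finset.sum_congr rfl
        intro j _
        simp only [mulVecCLM_apply, smul_pow, Matrix.smul_mulVec, smul_smul]
        rw [mul_comm]
      · intro j hj
        have hj0 : (N ^ j) *ᵥ v = 0 := hNv j (by simpa [Finset.mem_range, not_lt] using hj)
        simp [smul_pow, Matrix.smul_mulVec, hj0]
    rw [h2, Finset.smul_sum]
    apply Finset.sum_congr rfl
    intro j _
    rw [smul_smul]
  simp only [hsplit]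
  have h0 : (0 : n → ℂ) = ∑ _j ∈ Finset.range m, (0 : n → ℂ) := by simp
  rw [h0]
  apply tendsto_finset_sum
  intro j _
  have hscal : Tendsto (fun t : ℝ => Complex.exp ((t : ℂ) * μ) * ((t : ℂ) ^ j * (j ! : ℂ)⁻¹))
      atTop (𝓝 0) := by
    have hlim : Tendsto (fun t : ℝ => t ^ (j : ℝ) * Real.exp (-(-μ.re) * t) * ((j ! : ℝ))⁻¹)
        atTop (𝓝 0) := by
      simpa using
        (tendsto_rpow_mul_exp_neg_mul_atTop_nhds_zero j (-μ.re) (by linarith)).mul_const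
          ((j ! : ℝ))⁻¹
    rw [tendsto_zero_iff_norm_tendsto_zero]
    apply hlim.congr'
    filter_upwards [eventually_gt_atTop (0 : ℝ)] with t ht
    have hexp : ‖Complex.exp ((t : ℂ) * μ)‖ = Real.exp (t * μ.re) := by
      rw [Complex.norm_exp]
      congr 1
      simp [Complex.mul_re]
    rw [norm_mul, norm_mul, hexp, norm_pow, Complex.norm_real, Real.norm_of_nonneg ht.le,
      norm_inv, Complex.norm_natCast, Real.rpow_natCast]
    ring
  have := hscal.smul_const ((N ^ j) *ᵥ v)
  simpa using this

lemma tendsto_exp_smul_mulVec (M : Matrix n n ℂ)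
    (h : ∀ z ∈ spectrum ℂ M, z.re < 0) (v : n → ℂ) :
    Tendsto (fun t : ℝ => exp ((t : ℂ) • M) *ᵥ v) atTop (𝓝 0) := by
  let S : Submodule ℂ (n → ℂ) :=
    { carrier := {w | Tendsto (fun t : ℝ => exp ((t : ℂ) • M) *ᵥ w) atTop (𝓝 0)}
      add_mem' := by
        intro a b ha hb
        simpa [Matrix.mulVec_add] using ha.add hb
      zero_mem' := by
        simpa [Matrix.mulVec_zero] using (tendsto_const_nhds :
          Tendsto (fun _ : ℝ => (0 : n → ℂ)) atTop (𝓝 0))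
      smul_mem' := by
        intro c a ha
        simpa [Matrix.mulVec_smul] using ha.const_smul c }
  suffices hS : ⊤ ≤ S from hS (Submodule.mem_top (x := v))
  set f : Module.End ℂ (n → ℂ) := Matrix.toLinAlgEquiv' M with hf
  rw [← Module.End.iSup_maxGenEigenspace_eq_top f]
  apply iSup_le
  intro μ w hw
  obtain ⟨m, hm⟩ := (Module.End.mem_maxGenEigenspace f μ w).mp hw
  rcases eq_or_ne w 0 with rfl | hw0
  · exact S.zero_mem
  have hμs : μ ∈ spectrum ℂ M := by
    have hev : f.HasEigenvalue μ := by
      apply Module.End.hasEigenvalue_of_hasGenEigenvalue (k := m)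
      rw [Module.End.hasGenEigenvalue_iff]
      exact Submodule.ne_bot_iff _ |>.mpr
        ⟨w, (Module.End.mem_genEigenspace_nat).mpr hm, hw0⟩
    have hsp := Module.End.hasEigenvalue_iff_mem_spectrum.mp hev
    rwa [AlgEquiv.spectrum_eq Matrix.toLinAlgEquiv' M] at hsp
  have hm' : ((M - μ • 1) ^ m) *ᵥ w = 0 := by
    have hEnd : (f - μ • 1) ^ m = Matrix.toLinAlgEquiv' ((M - μ • 1) ^ m) := by
      rw [map_pow, map_sub, _root_.map_smul, _root_.map_one]
    rw [hEnd] at hm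
    rw [← Matrix.toLin'_apply ((M - μ • 1) ^ m) w]
    exact hm
  exact tendsto_exp_smul_mulVec_of_genEig M μ (h μ hμs) w m hm'

lemma tendsto_exp_smul_mulVec_real (F : Matrix n n ℝ)
    (h : ∀ z ∈ spectrum ℂ (F.map Complex.ofReal), z.re < 0) (x : n → ℝ) :
    Tendsto (fun t : ℝ => exp (t • F) *ᵥ x) atTop (𝓝 0) := by
  have hmap : ∀ t : ℝ, (exp (t • F)).map Complex.ofReal
      = exp ((t : ℂ) • F.map Complex.ofReal) := by
    intro t
    letI := Matrix.linftyOpNormedAddCommGroup (m := n) (n := n) (α := ℝ)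
    letI := Matrix.linftyOpNormedRing (n := n) (α := ℝ)
    letI := Matrix.linftyOpNormedAlgebra (n := n) (R := ℝ) (α := ℝ)
    haveI : CompleteSpace (Matrix n n ℝ) :=
      inferInstance
    letI := Matrix.linftyOpNormedAddCommGroup (m := n) (n := n) (α := ℂ)
    letI := Matrix.linftyOpNormedRing (n := n) (α := ℂ)
    letI := Matrix.linftyOpNormedAlgebra (n := n) (R := ℝ) (α := ℂ)
    letI := Matrix.linftyOpNormedAlgebra (n := n) (R := ℂ) (α := ℂ)
    haveI : CompleteSpace (Matrix n n ℂ) :=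
      inferInstance
    letI := Matrix.linftyOpNormedAlgebra (n := n) (R := ℚ) (α := ℝ)
    letI := Matrix.linftyOpNormedAlgebra (n := n) (R := ℚ) (α := ℂ)
    have hcont : Continuous fun A : Matrix n n ℝ => A.map (Complex.ofReal) := by
      let ψ : Matrix n n ℝ →ₗ[ℝ] Matrix n n ℂ :=
        { toFun := fun A => A.map Complex.ofReal
          map_add' := by intro A B; ext i j; simp
          map_smul' := by intro c A; ext i j; simp }
      exact ψ.continuous_of_finiteDimensional
    have h1 := map_exp (Complex.ofRealHom.mapMatrix (m := n)) (by exact hcont) (t • F)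
    have h2 : (Complex.ofRealHom.mapMatrix (t • F) : Matrix n n ℂ)
        = (t : ℂ) • F.map Complex.ofReal := by
      ext i j
      simp [Matrix.map_apply, smul_eq_mul, Complex.ofReal_mul]
    have h3 : exp ((t : ℂ) • F.map Complex.ofReal)
        = exp ((t : ℂ) • F.map Complex.ofReal) := rfl
    calc (exp (t • F)).map Complex.ofReal
        = Complex.ofRealHom.mapMatrix (exp (t • F)) := rfl
      _ = exp (Complex.ofRealHom.mapMatrix (t • F)) := h1
      _ = exp ((t : ℂ) • F.map Complex.ofReal) := by rw [h2]
      _ = exp ((t : ℂ) • F.map Complex.ofReal) := h3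
  have hkey : ∀ t : ℝ, ∀ i, (exp (t • F) *ᵥ x) i
      = ((exp ((t : ℂ) • F.map Complex.ofReal) *ᵥ fun j => (x j : ℂ)) i).re := by
    intro t i
    rw [← hmap t]
    simp only [Matrix.mulVec, dotProduct, Matrix.map_apply]
    rw [Complex.re_sum]
    apply Finset.sum_congr rfl
    intro j _
    simp [← Complex.ofReal_mul]
  have hc := tendsto_exp_smul_mulVec (F.map Complex.ofReal) h (fun j => (x j : ℂ))
  rw [tendsto_pi_nhds]
  intro i
  have hci := (tendsto_pi_nhds.mp hc) i
  have hre : Tendsto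
      (fun t : ℝ => ((exp ((t : ℂ) • F.map Complex.ofReal) *ᵥ fun j => (x j : ℂ)) i).re)
      atTop (𝓝 0) := by
    have := (Complex.continuous_re.tendsto 0).comp hci
    simpa [Function.comp_def] using this
  have := hre.congr (fun t => (hkey t i).symm)
  simpa using this

lemma hasDerivAt_exp_mulVec (F : Matrix n n ℝ) (x : n → ℝ) (t : ℝ) :
    HasDerivAt (fun s : ℝ => exp (s • F) *ᵥ x) (F *ᵥ (exp (t • F) *ᵥ x)) t := by
  letI := Matrix.linftyOpNormedAddCommGroup (m := n) (n := n) (α := ℝ)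
  letI := Matrix.linftyOpNormedRing (n := n) (α := ℝ)
  letI := Matrix.linftyOpNormedAlgebra (n := n) (R := ℝ) (α := ℝ)
  haveI : CompleteSpace (Matrix n n ℝ) :=
    inferInstance
  have hd := hasDerivAt_exp_smul_const' (𝕂 := ℝ) F t
  let L : Matrix n n ℝ →L[ℝ] (n → ℝ) :=
    { toLinearMap :=
        { toFun := fun M => M *ᵥ x
          map_add' := fun A B => Matrix.add_mulVec A B x
          map_smul' := fun c A => Matrix.smul_mulVec c A x }
      cont := continuous_id.matrix_mulVec continuous_const }
  have := L.hasFDerivAt.comp_hasDerivAt t hd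
  have h2 : L (F * exp (t • F)) = F *ᵥ (exp (t • F) *ᵥ x) := by
    show (F * exp (t • F)) *ᵥ x = _
    rw [Matrix.mulVec_mulVec]
  exact this.congr_deriv h2

lemma spectrum_transpose (A : Matrix n n ℂ) : spectrum ℂ Aᵀ = spectrum ℂ A := by
  ext z
  have key : ∀ B : Matrix n n ℂ, IsUnit B ↔ IsUnit Bᵀ := fun B => by
    rw [Matrix.isUnit_iff_isUnit_det, Matrix.isUnit_iff_isUnit_det, Matrix.det_transpose]
  have haux : (algebraMap ℂ (Matrix n n ℂ) z)ᵀ = algebraMap ℂ (Matrix n n ℂ) z := by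
    rw [Algebra.algebraMap_eq_smul_one, Matrix.transpose_smul, Matrix.transpose_one]
  have he : algebraMap ℂ (Matrix n n ℂ) z - Aᵀ = (algebraMap ℂ (Matrix n n ℂ) z - A)ᵀ := by
    rw [Matrix.transpose_sub, haux]
  rw [spectrum.mem_iff, spectrum.mem_iff, he, ← key]

lemma mul_vecMulVec (C : Matrix n n ℝ) (a b : n → ℝ) :
    C * vecMulVec a b = vecMulVec (C *ᵥ a) b := by
  ext i j
  simp [Matrix.mul_apply, Matrix.vecMulVec_apply, Matrix.mulVec, dotProduct,
    Finset.sum_mul, mul_assoc]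

lemma vecMulVec_mul (a b : n → ℝ) (C : Matrix n n ℝ) :
    vecMulVec a b * C = vecMulVec a (Cᵀ *ᵥ b) := by
  ext i j
  simp [Matrix.mul_apply, Matrix.vecMulVec_apply, Matrix.mulVec, dotProduct,
    Finset.mul_sum, mul_comm, mul_left_comm]

lemma vecMulVec_transpose' (a b : n → ℝ) : (vecMulVec a b)ᵀ = vecMulVec b a := by
  ext i j
  simp [Matrix.vecMulVec_apply, mul_comm]

lemma dot_vecMulVec (r z : n → ℝ) : z ⬝ᵥ (vecMulVec r r *ᵥ z) = (r ⬝ᵥ z) ^ 2 := by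
  have h1 : vecMulVec r r *ᵥ z = (r ⬝ᵥ z) • r := by
    ext i
    simp [Matrix.mulVec, Matrix.vecMulVec_apply, dotProduct, mul_assoc, ← Finset.mul_sum]
    ring
  rw [h1, dotProduct_smul]
  rw [dotProduct_comm]
  ring_nf

lemma hasDerivAt_quadForm (D : Matrix n n ℝ) (y : ℝ → n → ℝ) (y' : n → ℝ) (t : ℝ)
    (hy : HasDerivAt y y' t) :
    HasDerivAt (fun s => y s ⬝ᵥ (D *ᵥ y s)) (y' ⬝ᵥ (D *ᵥ y t) + y t ⬝ᵥ (D *ᵥ y')) t := by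
  have hyi : ∀ i, HasDerivAt (fun s => y s i) (y' i) t := fun i =>
    ((ContinuousLinearMap.proj i : (n → ℝ) →L[ℝ] ℝ).hasFDerivAt.comp_hasDerivAt t hy)
  have H : HasDerivAt (fun s => ∑ i, ∑ j, y s i * (D i j * y s j))
      (∑ i, ∑ j, (y' i * (D i j * y t j) + y t i * (D i j * y' j))) t := by
    apply HasDerivAt.fun_sum
    intro i _
    apply HasDerivAt.fun_sum
    intro j _
    exact (hyi i).mul ((hyi j).const_mul (D i j))
  have heq : ∀ s : ℝ, y s ⬝ᵥ (D *ᵥ y s) = ∑ i, ∑ j, y s i * (D i j * y s j) := by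
    intro s
    simp [dotProduct, Matrix.mulVec, Finset.mul_sum]
  have heq2 : y' ⬝ᵥ (D *ᵥ y t) + y t ⬝ᵥ (D *ᵥ y')
      = ∑ i, ∑ j, (y' i * (D i j * y t j) + y t i * (D i j * y' j)) := by
    simp [dotProduct, Matrix.mulVec, Finset.mul_sum, Finset.sum_add_distrib]
  rw [heq2]
  exact H.congr_of_eventuallyEq (Filter.Eventually.of_forall fun s => (heq s))

end Decay

open Filter NormedSpace Topology

/-- Let `γ > 0` and `σ > 0`. Suppose `Q_γ` is a symmetric `(k+1)×(k+1)`
real matrix satisfying `aQ_γ + Q_γaᵀ + γ²𝔟𝔟ᵀ − (1/σ²) Q_γ AᵀA Q_γ = 0`, and set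
`q_* = (1/σ²) Q_γ Aᵀ`. Let `q ∈ ℝ^{k+1}` be any column vector such that `a − qA` is
stable, and let `Q_q` be a symmetric `(k+1)×(k+1)` real matrix satisfying the Lyapunov
equation `(a − qA)Q_q + Q_q(a − qA)ᵀ + σ²qqᵀ + γ²𝔟𝔟ᵀ = 0`. Then `Q_q − Q_γ` is
positive semidefinite. -/
theorem riccati_optimality (k : ℕ) (γ σ : ℝ) (hγ : 0 < γ) (hσ : 0 < σ)
    (Qγ : Matrix (Fin (k + 1)) (Fin (k + 1)) ℝ) (hQγsym : Qγ.IsSymm)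
    (hQγ : shiftMat k * Qγ + Qγ * (shiftMat k)ᵀ + γ ^ 2 • (colb k * (colb k)ᵀ) -
      (1 / σ ^ 2) • (Qγ * (rowA k)ᵀ * rowA k * Qγ) = 0)
    (q : Fin (k + 1) → ℝ)
    (hstable : ∀ z ∈ spectrum ℂ
      ((shiftMat k - Matrix.vecMulVec q (fun j => rowA k 0 j)).map Complex.ofReal),
      z.re < 0)
    (Qq : Matrix (Fin (k + 1)) (Fin (k + 1)) ℝ) (hQqsym : Qq.IsSymm)
    (hQq : (shiftMat k - Matrix.vecMulVec q (fun j => rowA k 0 j)) * Qq +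
      Qq * (shiftMat k - Matrix.vecMulVec q (fun j => rowA k 0 j))ᵀ +
      σ ^ 2 • Matrix.vecMulVec q q + γ ^ 2 • (colb k * (colb k)ᵀ) = 0) :
    (Qq - Qγ).PosSemidef := by

  classical
  set u : Fin (k + 1) → ℝ := fun j => rowA k 0 j with hu
  set F := shiftMat k - Matrix.vecMulVec q u with hF
  set D := Qq - Qγ with hD
  set w : Fin (k + 1) → ℝ := Qγ *ᵥ u with hw
  set r : Fin (k + 1) → ℝ := q - (1 / σ ^ 2) • w with hr
  have hσ2 : σ ^ 2 ≠ 0 := pow_ne_zero 2 hσ.ne'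
  have hQT : Qγᵀ = Qγ := hQγsym
  -- structural identities
  have hGtG : (rowA k)ᵀ * rowA k = vecMulVec u u := by
    ext i j
    simp [Matrix.mul_apply, rowA, Matrix.vecMulVec_apply, hu, Fin.sum_univ_one]
  have hG : Qγ * (rowA k)ᵀ * rowA k * Qγ = vecMulVec w w := by
    calc Qγ * (rowA k)ᵀ * rowA k * Qγ = Qγ * ((rowA k)ᵀ * rowA k) * Qγ := by
          rw [Matrix.mul_assoc Qγ ((rowA k)ᵀ) (rowA k)]
      _ = Qγ * vecMulVec u u * Qγ := by rw [hGtG]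
      _ = vecMulVec (Qγ *ᵥ u) u * Qγ := by rw [_root_.mul_vecMulVec]
      _ = vecMulVec (Qγ *ᵥ u) (Qγᵀ *ᵥ u) := by rw [_root_.vecMulVec_mul]
      _ = vecMulVec w w := by rw [hQT, ← hw]
  have h3 : vecMulVec q u * Qγ = vecMulVec q w := by
    rw [_root_.vecMulVec_mul, hQT, ← hw]
  have h4 : Qγ * (vecMulVec q u)ᵀ = vecMulVec w q := by
    rw [vecMulVec_transpose', _root_.mul_vecMulVec, ← hw]
  have e1 : F * Qq + Qq * Fᵀ = -(σ ^ 2 • vecMulVec q q) - γ ^ 2 • (colb k * (colb k)ᵀ) := by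
    rw [← sub_eq_zero, ← hQq]
    abel
  have e2 : shiftMat k * Qγ + Qγ * (shiftMat k)ᵀ
      = (1 / σ ^ 2) • vecMulVec w w - γ ^ 2 • (colb k * (colb k)ᵀ) := by
    have h := hQγ
    rw [hG] at h
    rw [← sub_eq_zero, ← h]
    abel
  have e5 : σ ^ 2 • vecMulVec r r = σ ^ 2 • vecMulVec q q - vecMulVec q w - vecMulVec w q
      + (1 / σ ^ 2) • vecMulVec w w := by
    ext i j
    simp only [Matrix.smul_apply, Matrix.sub_apply, Matrix.add_apply, Matrix.vecMulVec_apply,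
      hr, Pi.sub_apply, Pi.smul_apply, smul_eq_mul]
    field_simp
    ring
  have key : F * D + D * Fᵀ = -(σ ^ 2 • vecMulVec r r) := by
    have hFQ : F * Qγ = shiftMat k * Qγ - vecMulVec q w := by
      rw [hF, Matrix.sub_mul, h3]
    have hQF : Qγ * Fᵀ = Qγ * (shiftMat k)ᵀ - vecMulVec w q := by
      rw [hF, Matrix.transpose_sub, Matrix.mul_sub, h4]
    rw [hD, Matrix.mul_sub F Qq Qγ, Matrix.sub_mul Qq Qγ Fᵀ, hFQ, hQF,
      show F * Qq = (-(σ ^ 2 • vecMulVec q q) - γ ^ 2 • (colb k * (colb k)ᵀ)) - Qq * Fᵀ from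
        eq_sub_of_add_eq e1,
      show shiftMat k * Qγ = ((1 / σ ^ 2) • vecMulVec w w - γ ^ 2 • (colb k * (colb k)ᵀ))
          - Qγ * (shiftMat k)ᵀ from eq_sub_of_add_eq e2,
      e5]
    abel
  rw [Matrix.posSemidef_iff_dotProduct_mulVec]
  constructor
  · rw [Matrix.IsHermitian, Matrix.conjTranspose_eq_transpose_of_trivial,
      Matrix.transpose_sub, hQqsym, hQγsym]
  intro x
  set y : ℝ → (Fin (k + 1) → ℝ) := fun t => NormedSpace.exp (t • Fᵀ) *ᵥ x with hy
  set ph : ℝ → ℝ := fun t => y t ⬝ᵥ (D *ᵥ y t) with hph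
  have hyd : ∀ t, HasDerivAt y (Fᵀ *ᵥ y t) t := fun t => hasDerivAt_exp_mulVec Fᵀ x t
  have hphd : ∀ t, HasDerivAt ph (-(σ ^ 2 * (r ⬝ᵥ y t) ^ 2)) t := by
    intro t
    have H := hasDerivAt_quadForm D y (Fᵀ *ᵥ y t) t (hyd t)
    have heq : (Fᵀ *ᵥ y t) ⬝ᵥ (D *ᵥ y t) + y t ⬝ᵥ (D *ᵥ (Fᵀ *ᵥ y t))
        = -(σ ^ 2 * (r ⬝ᵥ y t) ^ 2) := by
      have t1 : (Fᵀ *ᵥ y t) ⬝ᵥ (D *ᵥ y t) = y t ⬝ᵥ ((F * D) *ᵥ y t) := by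
        rw [Matrix.mulVec_transpose, ← dotProduct_mulVec, Matrix.mulVec_mulVec]
      have t2 : y t ⬝ᵥ (D *ᵥ (Fᵀ *ᵥ y t)) = y t ⬝ᵥ ((D * Fᵀ) *ᵥ y t) := by
        rw [Matrix.mulVec_mulVec]
      rw [t1, t2, ← dotProduct_add, ← Matrix.add_mulVec, key]
      have : (-(σ ^ 2 • vecMulVec r r)) *ᵥ y t = -(σ ^ 2 • (vecMulVec r r *ᵥ y t)) := by
        rw [Matrix.neg_mulVec, Matrix.smul_mulVec]
      rw [this, dotProduct_neg, dotProduct_smul, dot_vecMulVec]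
      simp [smul_eq_mul]
    rw [← heq]
    exact H
  have hmono : Antitone ph := by
    apply antitone_of_deriv_nonpos
    · intro t
      exact (hphd t).differentiableAt
    · intro t
      rw [(hphd t).deriv]
      have : (0 : ℝ) ≤ σ ^ 2 * (r ⬝ᵥ y t) ^ 2 := by positivity
      linarith
  have hylim : Tendsto y atTop (𝓝 0) := by
    apply tendsto_exp_smul_mulVec_real
    intro z hz
    apply hstable z
    rwa [show (Fᵀ).map Complex.ofReal = (F.map Complex.ofReal)ᵀ from
        Matrix.transpose_map, spectrum_transpose] at hz
  have hphlim : Tendsto ph atTop (𝓝 0) := by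
    have hci : ∀ i, Tendsto (fun t => y t i) atTop (𝓝 0) := fun i => by
      simpa using tendsto_pi_nhds.mp hylim i
    have hsum : Tendsto (fun t => ∑ i, y t i * (D *ᵥ y t) i) atTop (𝓝 (∑ _i : Fin (k + 1), (0:ℝ))) := by
      apply tendsto_finset_sum
      intro i _
      have h1 : Tendsto (fun t => (D *ᵥ y t) i) atTop (𝓝 (∑ _j : Fin (k + 1), (0:ℝ))) := by
        apply tendsto_finset_sum
        intro j _
        simpa using (hci j).const_mul (D i j)
      simp only [Finset.sum_const_zero] at h1
      simpa using (hci i).mul h1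
    simp only [Finset.sum_const_zero] at hsum
    exact hsum
  have hbound : ∀ᶠ t in atTop, ph t ≤ ph 0 := by
    filter_upwards [eventually_ge_atTop (0 : ℝ)] with t ht
    exact hmono ht
  have h0le : (0 : ℝ) ≤ ph 0 := le_of_tendsto hphlim hbound
  have hy0 : y 0 = x := by
    rw [hy]
    simp only [zero_smul]
    rw [NormedSpace.exp_zero, Matrix.one_mulVec]
  have hph0 : ph 0 = x ⬝ᵥ (D *ᵥ x) := by
    simp only [hph]
    rw [hy0]
  rw [hph0] at h0le
  simpa using h0le
end
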